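/- Suppose σ̃_A < σ̃_B, μ_A ≥ 0 and μ_B ≥ 0. For α ∈ (0,1) let t_α := Φ⁻¹(1−α) and define B(α) := 1 − p_A·(Δμ + t_α·Δσ̃)/(p_A·μ_A + p_B·μ_B + (φ(t_α)/α)·(p_A·σ̃_A + p_B·σ̃_B)). Then B(α) converges, as α → 0⁺, to 1 − p_A·Δσ̃/(p_A·σ̃_A + p_B·σ̃_B); that is, in the limit of a vanishing selection budget the upper bound of the fairness-cost theorem (for γ = 1) depends only on the variances σ̃_A, σ̃_B and not on the difference of means Δμ. -/

import Mathlib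

noncomputable def gpdf (t : ℝ) : ℝ := Real.exp (-t ^ 2 / 2) / Real.sqrt (2 * Real.pi)

noncomputable def gcdf (x : ℝ) : ℝ := ∫ t in Set.Iic x, gpdf t

noncomputable def gquant : ℝ → ℝ := Function.invFun gcdf

noncomputable def sHat (η σ : ℝ) : ℝ := Real.sqrt (η ^ 2 + σ ^ 2)

noncomputable def sTil (η σ : ℝ) : ℝ := η ^ 2 / sHat η σ

def Dset (pA α : ℝ) : Set ℝ :=
  {x | x ∈ Set.Ioo (0:ℝ) 1 ∧ (α - pA * x) / (1 - pA) ∈ Set.Ioo (0:ℝ) 1}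

noncomputable def Qfun (pA α μA μB sA sB x : ℝ) : ℝ :=
  (1 / α) * (pA * (μA * x + sA * gpdf (gquant (1 - x)))
    + (1 - pA) * (μB * ((α - pA * x) / (1 - pA))
      + sB * gpdf (gquant (1 - (α - pA * x) / (1 - pA)))))

noncomputable def clampTo (lo hi x : ℝ) : ℝ := min hi (max lo x)

/-!
Put `t = Φ⁻¹(1 - α)`, so that `α = 1 - Φ(t)` and `t → ∞` as `α → 0⁺`. Multiplying numerator and
denominator of `B(α)` by Mills' ratio `R(t) = (1 - Φ(t)) / φ(t) = α / φ(t)` gives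
`B = 1 - p_A (Δμ R(t) + t R(t) Δσ̃) / ((p_A μ_A + p_B μ_B) R(t) + p_A σ̃_A + p_B σ̃_B)`.
L'Hôpital's rule applied to `(1 - Φ(t)) / (φ(t) / t)` gives `t R(t) → 1`, hence `R(t) → 0`, and the
limit `1 - p_A Δσ̃ / (p_A σ̃_A + p_B σ̃_B)` follows.
-/

open Real MeasureTheory Filter Set Topology ProbabilityTheory

lemma gpdf_eq_gaussianPDFReal : gpdf = gaussianPDFReal 0 1 := by
  ext t
  simp [gpdf, gaussianPDFReal, div_eq_inv_mul]

lemma gpdf_pos (t : ℝ) : 0 < gpdf t := by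
  rw [gpdf_eq_gaussianPDFReal]
  exact gaussianPDFReal_pos 0 1 t one_ne_zero

lemma integrable_gpdf : Integrable gpdf :=
  gpdf_eq_gaussianPDFReal ▸ integrable_gaussianPDFReal 0 1

lemma integral_gpdf : ∫ t, gpdf t = 1 := by
  rw [gpdf_eq_gaussianPDFReal]
  exact integral_gaussianPDFReal_eq_one 0 one_ne_zero

lemma hasDerivAt_gpdf (x : ℝ) : HasDerivAt gpdf (-x * gpdf x) x := by
  have h : HasDerivAt (fun t : ℝ => -t ^ 2 / 2) (-(2 * x) / 2) x := by
    simpa using ((hasDerivAt_pow 2 x).neg).div_const 2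
  exact (h.exp.div_const (√(2 * π))).congr_deriv (by rw [gpdf]; ring)

lemma tendsto_gpdf_atTop : Tendsto gpdf atTop (𝓝 0) := by
  have h : Tendsto (fun t : ℝ => -t ^ 2 / 2) atTop atBot :=
    (tendsto_neg_atTop_atBot.comp (tendsto_pow_atTop two_ne_zero)).atBot_div_const two_pos
  unfold gpdf
  simpa using (tendsto_exp_atBot.comp h).div_const (√(2 * π))

lemma one_sub_gcdf (x : ℝ) : 1 - gcdf x = ∫ t in Ioi x, gpdf t := by
  rw [← integral_gpdf, ← intervalIntegral.integral_Iic_add_Ioi integrable_gpdf.integrableOn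
    integrable_gpdf.integrableOn, gcdf, add_sub_cancel_left]

lemma one_sub_gcdf_pos (x : ℝ) : 0 < 1 - gcdf x := by
  rw [one_sub_gcdf, setIntegral_pos_iff_support_of_nonneg_ae
    (ae_of_all _ fun t => (gpdf_pos t).le) integrable_gpdf.integrableOn,
    Function.support_eq_univ fun t => (gpdf_pos t).ne', univ_inter]
  simp

lemma hasDerivAt_gcdf (x : ℝ) : HasDerivAt gcdf (gpdf x) x := by
  have hcont : Continuous gpdf := by unfold gpdf; fun_prop
  have hgcdf : gcdf = fun u => gcdf 0 + ∫ t in (0 : ℝ)..u, gpdf t := by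
    ext u
    rw [← intervalIntegral.integral_Iic_sub_Iic integrable_gpdf.integrableOn
      integrable_gpdf.integrableOn, gcdf, gcdf, add_sub_cancel]
  rw [hgcdf]
  exact (intervalIntegral.integral_hasDerivAt_right integrable_gpdf.intervalIntegrable
    hcont.stronglyMeasurable.stronglyMeasurableAtFilter hcont.continuousAt).const_add _

lemma continuous_gcdf : Continuous gcdf :=
  continuous_iff_continuousAt.2 fun x => (hasDerivAt_gcdf x).continuousAt

lemma strictMono_gcdf : StrictMono gcdf :=
  strictMono_of_hasDerivAt_pos hasDerivAt_gcdf gpdf_pos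

lemma tendsto_gcdf_atTop : Tendsto gcdf atTop (𝓝 1) := by
  have h := (aecover_Iic tendsto_id).integral_tendsto_of_countably_generated integrable_gpdf
  rwa [integral_gpdf] at h

lemma tendsto_gcdf_atBot : Tendsto gcdf atBot (𝓝 0) := by
  have h := (aecover_Ioi tendsto_id).integral_tendsto_of_countably_generated integrable_gpdf
  simp only [id, ← one_sub_gcdf, integral_gpdf] at h
  simpa using (tendsto_const_nhds (x := (1 : ℝ))).sub h

lemma gcdf_gquant {y : ℝ} (hy : y ∈ Ioo 0 1) : gcdf (gquant y) = y := by
  refine Function.invFun_eq (mem_range_of_exists_le_of_exists_ge continuous_gcdf ?_ ?_)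
  · exact ((tendsto_gcdf_atBot.eventually_lt_const hy.1).exists).imp fun _ => le_of_lt
  · exact ((tendsto_gcdf_atTop.eventually_const_lt hy.2).exists).imp fun _ => le_of_lt

lemma one_sub_gcdf_gquant_one_sub {α : ℝ} (hα : α ∈ Ioo 0 1) :
    1 - gcdf (gquant (1 - α)) = α := by
  rw [gcdf_gquant ⟨sub_pos.2 hα.2, sub_lt_self 1 hα.1⟩, sub_sub_cancel]

lemma tendsto_gquant_one_sub : Tendsto (fun α : ℝ => gquant (1 - α)) (𝓝[>] 0) atTop := by
  refine tendsto_atTop.2 fun C => ?_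
  filter_upwards [Ioo_mem_nhdsGT (lt_min one_pos (one_sub_gcdf_pos C))] with α hα
  have hlt : gcdf C < gcdf (gquant (1 - α)) := by
    rw [gcdf_gquant ⟨sub_pos.2 (hα.2.trans_le (min_le_left _ _)), sub_lt_self 1 hα.1⟩]
    linarith [hα.2.trans_le (min_le_right _ _)]
  exact (strictMono_gcdf.lt_iff_lt.1 hlt).le

noncomputable def millsRatio (t : ℝ) : ℝ := (1 - gcdf t) / gpdf t

lemma millsRatio_pos (t : ℝ) : 0 < millsRatio t :=
  div_pos (one_sub_gcdf_pos t) (gpdf_pos t)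

lemma tendsto_sq_div_one_add_sq_atTop :
    Tendsto (fun x : ℝ => x ^ 2 / (1 + x ^ 2)) atTop (𝓝 1) := by
  have h : Tendsto (fun x : ℝ => (1 + (x ^ 2)⁻¹)⁻¹) atTop (𝓝 1) := by
    simpa using ((tendsto_inv_atTop_zero.comp (tendsto_pow_atTop two_ne_zero)).const_add
      (1 : ℝ)).inv₀ (by norm_num)
  refine h.congr' ?_
  filter_upwards [eventually_ne_atTop 0] with x hx
  field_simp
  ring

lemma tendsto_mul_millsRatio_atTop : Tendsto (fun t => t * millsRatio t) atTop (𝓝 1) := by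
  have hg : ∀ x : ℝ, x ≠ 0 →
      HasDerivAt (fun t => gpdf t / t) (-(gpdf x * (1 + x ^ 2) / x ^ 2)) x := fun x hx =>
    ((hasDerivAt_gpdf x).div (hasDerivAt_id x) hx).congr_deriv (by simp only [id]; field_simp; ring)
  have h := HasDerivAt.lhopital_zero_atTop (f := fun t => 1 - gcdf t)
    (Eventually.of_forall fun x => (hasDerivAt_gcdf x).const_sub 1)
    ((eventually_ne_atTop 0).mono hg)
    ((eventually_ne_atTop 0).mono fun x hx => neg_ne_zero.2 (by positivity [gpdf_pos x]))
    (by simpa using tendsto_gcdf_atTop.const_sub 1) (tendsto_gpdf_atTop.div_atTop tendsto_id)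
    (tendsto_sq_div_one_add_sq_atTop.congr' ?_)
  · exact h.congr fun t => by
      rw [millsRatio, div_div_eq_mul_div, mul_div_right_comm, mul_comm]
  · filter_upwards [eventually_ne_atTop 0] with x hx
    have := (gpdf_pos x).ne'
    field_simp

lemma tendsto_millsRatio_atTop : Tendsto millsRatio atTop (𝓝 0) := by
  refine (tendsto_mul_millsRatio_atTop.div_atTop tendsto_id).congr' ?_
  filter_upwards [eventually_ne_atTop 0] with t ht
  exact mul_div_cancel_left₀ _ ht

lemma tendsto_one_sub_div_add_inv_millsRatio_atTop (p D M Δ S : ℝ) (hS : S ≠ 0) :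
    Tendsto (fun t => 1 - p * (D + t * Δ) / (M + gpdf t / (1 - gcdf t) * S)) atTop
      (𝓝 (1 - p * Δ / S)) := by
  have h : Tendsto (fun t => 1 - p * (D * millsRatio t + t * millsRatio t * Δ)
      / (M * millsRatio t + S)) atTop (𝓝 (1 - p * (D * 0 + 1 * Δ) / (M * 0 + S))) :=
    tendsto_const_nhds.sub ((((tendsto_millsRatio_atTop.const_mul D).add
      (tendsto_mul_millsRatio_atTop.mul_const Δ)).const_mul p).div
      ((tendsto_millsRatio_atTop.const_mul M).add_const S) (by simpa using hS))
  simp only [mul_zero, zero_add, one_mul] at h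
  refine h.congr fun t => ?_
  have hR := (millsRatio_pos t).ne'
  have hφ := (gpdf_pos t).ne'
  have hT := (one_sub_gcdf_pos t).ne'
  rw [millsRatio] at hR ⊢
  field_simp

theorem stmt10_general (pA μA μB ηA ηB σA σB : ℝ)
    (hpA : pA ∈ Set.Ioo (0:ℝ) 1)
    (hstil : sTil ηA σA < sTil ηB σB) :
    Filter.Tendsto
      (fun α : ℝ =>
        1 - pA * ((μA - μB) + gquant (1 - α) * (sTil ηA σA - sTil ηB σB))
          / (pA * μA + (1 - pA) * μB
              + (gpdf (gquant (1 - α)) / α) * (pA * sTil ηA σA + (1 - pA) * sTil ηB σB)))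
      (nhdsWithin 0 (Set.Ioi 0))
      (nhds (1 - pA * (sTil ηA σA - sTil ηB σB)
          / (pA * sTil ηA σA + (1 - pA) * sTil ηB σB))) := by
  have hsA : 0 ≤ sTil ηA σA := div_nonneg (sq_nonneg ηA) (sqrt_nonneg _)
  have hS : 0 < pA * sTil ηA σA + (1 - pA) * sTil ηB σB :=
    add_pos_of_nonneg_of_pos (mul_nonneg hpA.1.le hsA)
      (mul_pos (sub_pos.2 hpA.2) (hsA.trans_lt hstil))
  refine ((tendsto_one_sub_div_add_inv_millsRatio_atTop pA (μA - μB) (pA * μA + (1 - pA) * μB)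
    _ _ hS.ne').comp tendsto_gquant_one_sub).congr' ?_
  filter_upwards [Ioo_mem_nhdsGT one_pos] with α hα
  rw [Function.comp_apply, one_sub_gcdf_gquant_one_sub hα]

/-- as the budget `α` tends to `0⁺`, the fairness-cost upper bound
(for `γ = 1`) converges to a limit depending only on the variances. -/
theorem stmt10 (pA μA μB ηA ηB σA σB : ℝ)
    (hpA : pA ∈ Set.Ioo (0:ℝ) 1)
    (hηA : 0 < ηA) (hηB : 0 < ηB) (hσA : 0 < σA) (hσB : 0 < σB)
    (hstil : sTil ηA σA < sTil ηB σB) (hμA : 0 ≤ μA) (hμB : 0 ≤ μB) :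
    Filter.Tendsto
      (fun α : ℝ =>
        1 - pA * ((μA - μB) + gquant (1 - α) * (sTil ηA σA - sTil ηB σB))
          / (pA * μA + (1 - pA) * μB
              + (gpdf (gquant (1 - α)) / α) * (pA * sTil ηA σA + (1 - pA) * sTil ηB σB)))
      (nhdsWithin 0 (Set.Ioi 0))
      (nhds (1 - pA * (sTil ηA σA - sTil ηB σB)
          / (pA * sTil ηA σA + (1 - pA) * sTil ηB σB))) :=
  stmt10_general pA μA μB ηA ηB σA σB hpA hstil
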